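/- Let k be a field of arbitrary characteristic and B = k^[3] a polynomial ring in three variables over k. If δ is an exponential map on B over k that is triangular with respect to a coordinate system {X,Y,Z} and rank(δ) = 2, then δ(X) = X. In particular, any triangular exponential map of k^[3] has rank at most 2. -/

import Mathlib

open Polynomial

/-- An *exponential map* on a commutative ring `B` over `A`: an `A`-algebra homomorphism
`δ : B → B[t]` such that evaluation at `t = 0` is the identity and
`δ_s ∘ δ_t = δ_{s+t}` (the co-associativity / iterativity condition). -/
structure ExpMap (A : Type*) (B : Type*) [CommRing A] [CommRing B] [Algebra A B] where
  toFun : B →ₐ[A] Polynomial B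
  eval_zero : ∀ b : B, (toFun b).eval 0 = b
  coassoc : ∀ b : B,
    (toFun b).map (toFun.toRingHom) =
      (toFun b).eval₂ (Polynomial.C.comp Polynomial.C)
        (Polynomial.C Polynomial.X + Polynomial.X)

namespace ExpMap

variable {A B : Type*} [CommRing A] [CommRing B] [Algebra A B]

/-- The ring of invariants `B^δ = {x ∈ B | δ(x) = x}`. -/
def invariants (δ : ExpMap A B) : Subalgebra A B where
  carrier := {x : B | δ.toFun x = Polynomial.C x}
  mul_mem' := by
    intro a b ha hb
    simp only [Set.mem_setOf_eq] at *
    rw [map_mul, ha, hb, ← map_mul]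
  add_mem' := by
    intro a b ha hb
    simp only [Set.mem_setOf_eq] at *
    rw [map_add, ha, hb, ← map_add]
  algebraMap_mem' := by
    intro r
    simp only [Set.mem_setOf_eq, AlgHom.commutes, Polynomial.algebraMap_apply]

/-- `δ` is non-trivial if `B^δ ≠ B`. -/
def IsNontrivial (δ : ExpMap A B) : Prop := δ.invariants ≠ ⊤

/-- The iterative higher derivations attached to `δ`: `δ(x) = Σ (D i x) tⁱ`. -/
noncomputable def D (δ : ExpMap A B) (i : ℕ) (x : B) : B := (δ.toFun x).coeff i

/-- A *local slice* of `δ`: an element whose image under `δ` has minimal positive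
`t`-degree. -/
def IsLocalSlice (δ : ExpMap A B) (x : B) : Prop :=
  0 < (δ.toFun x).natDegree ∧
    ∀ y : B, 0 < (δ.toFun y).natDegree → (δ.toFun x).natDegree ≤ (δ.toFun y).natDegree

/-- A *slice* of `δ`: a local slice `x` such that `D n x` is a unit, where
`n = deg_t δ(x)`. -/
def IsSlice (δ : ExpMap A B) (x : B) : Prop :=
  δ.IsLocalSlice x ∧ IsUnit ((δ.toFun x).coeff (δ.toFun x).natDegree)

end ExpMap

/-- `X : Fin n → B` is a *coordinate system* of `B` over `A`, i.e. `B = A[X₁, …, Xₙ]`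
is a polynomial ring in the `n` variables `X₁, …, Xₙ` over `A`. -/
def IsCoordSystem (A : Type*) {B : Type*} [CommRing A] [CommRing B] [Algebra A B]
    {n : ℕ} (X : Fin n → B) : Prop :=
  Function.Bijective (MvPolynomial.aeval (R := A) X)

namespace ExpMap

variable {A B : Type*} [CommRing A] [CommRing B] [Algebra A B]

/-- The *rank* of an exponential map `δ` on `B = A^[n]`: the least `r` such that some
coordinate system `{X₁, …, Xₙ}` satisfies `A[X₁, …, X_{n-r}] ⊆ B^δ`. -/
noncomputable def rank (δ : ExpMap A B) (n : ℕ) : ℕ :=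
  sInf {r : ℕ | ∃ X : Fin n → B, IsCoordSystem A X ∧
    Algebra.adjoin A (X '' {i : Fin n | (i : ℕ) < n - r}) ≤ δ.invariants}

/-- `X ∈ Γ_δ(B)`: a coordinate system with `A[X₁, …, X_{n-r}] ⊆ B^δ` where `r = rank δ`. -/
def InGamma (δ : ExpMap A B) {n : ℕ} (X : Fin n → B) : Prop :=
  IsCoordSystem A X ∧
    Algebra.adjoin A (X '' {i : Fin n | (i : ℕ) < n - δ.rank n}) ≤ δ.invariants

/-- `δ` is *rigid* if the subring `A[X₁, …, X_{n-r}]` does not depend on the choice of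
`{X₁, …, Xₙ} ∈ Γ_δ(B)`. -/
def IsRigid (δ : ExpMap A B) (n : ℕ) : Prop :=
  ∀ X X' : Fin n → B, δ.InGamma X → δ.InGamma X' →
    Algebra.adjoin A (X '' {i : Fin n | (i : ℕ) < n - δ.rank n}) =
      Algebra.adjoin A (X' '' {i : Fin n | (i : ℕ) < n - δ.rank n})

/-- `δ` is *triangular with respect to the coordinate system `X`* over `A`. -/
def IsTriangularWith (δ : ExpMap A B) {n : ℕ} (X : Fin n → B) : Prop :=
  IsCoordSystem A X ∧
    (∀ i : Fin n, ∀ j : ℕ, 0 < j →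
      (δ.toFun (X i)).coeff j ∈ Algebra.adjoin A (X '' {l : Fin n | (l : ℕ) < (i : ℕ)})) ∧
    (∀ i : Fin n, δ.toFun (X i) ≠ Polynomial.C (X i) →
      (∀ l : Fin n, (l : ℕ) < (i : ℕ) → δ.toFun (X l) = Polynomial.C (X l)) →
      δ.IsLocalSlice (X i))

/-- `δ` is *triangular* over `A` (in `n` variables). -/
def IsTriangular (δ : ExpMap A B) (n : ℕ) : Prop :=
  ∃ X : Fin n → B, δ.IsTriangularWith X

/-- `δ` is *triangular over the subring `R`* of `B` (with `B = R^[m]`). -/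
def IsTriangularOver (δ : ExpMap A B) (R : Subalgebra A B) (m : ℕ) : Prop :=
  ∃ X : Fin m → B,
    Function.Bijective (MvPolynomial.aeval (R := ↥R) X) ∧
    (∀ i : Fin m, ∀ j : ℕ, 0 < j →
      (δ.toFun (X i)).coeff j ∈ Algebra.adjoin (↥R) (X '' {l : Fin m | (l : ℕ) < (i : ℕ)})) ∧
    (∀ i : Fin m, δ.toFun (X i) ≠ Polynomial.C (X i) →
      (∀ l : Fin m, (l : ℕ) < (i : ℕ) → δ.toFun (X l) = Polynomial.C (X l)) →
      δ.IsLocalSlice (X i))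

end ExpMap

/-!
If `δ X ≠ X`, then `X` is a local slice with `δ X - X ∈ t k[t]`, of `t`-degree `N` say. Comparing
coefficients in `δ_s ∘ δ_t = δ_{s+t}` shows that `(N choose i) = 0` for `0 < i < N`, and that the
`t`-degree of `δ b` is a multiple of `N`, with leading coefficient in `R`, whenever `R ⊆ B^δ` and
the higher coefficients of `δ b` lie in `R[X]`. Subtracting `ρ κ⁻ᵐ Xᵐ` then lowers the degree, so
every such `b` lies in `B^δ + R[X]`. Applied with `R = k` to `Y` and with `R = k[v]` to `Z`, this
yields invariants `v = Y - g(X)` and `w = Z - h(v, X)` with `k[v, w, X] = B`. A surjective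
endomorphism of the Noetherian ring `k^[3]` is injective, so `{v, w, X}` is a coordinate system
and `rank δ ≤ 1`.
-/

theorem AlgHom.injective_of_surjective_of_isNoetherianRing {R S : Type*} [CommSemiring R]
    [CommRing S] [Algebra R S] [IsNoetherianRing S] (f : S →ₐ[R] S)
    (hf : Function.Surjective f) : Function.Injective f := by
  let K : ℕ →o Ideal S :=
    ⟨fun n => RingHom.ker (f ^ n), monotone_nat_of_le_succ fun n a ha => by
      simp_all [Function.iterate_succ_apply']⟩
  obtain ⟨n, hn⟩ := monotone_stabilizes_iff_noetherian.mpr ‹IsNoetherianRing S› K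
  rw [injective_iff_map_eq_zero]
  intro a ha
  obtain ⟨b, rfl⟩ := hf.iterate n a
  have hb : b ∈ K (n + 1) := by simpa [K, Function.iterate_succ_apply'] using ha
  rw [← hn (n + 1) n.le_succ] at hb
  simpa [K] using hb

theorem IsCoordSystem.of_adjoin_range_eq_top {A B : Type*} [CommRing A] [IsNoetherianRing A]
    [CommRing B] [Algebra A B] {n : ℕ} {X Y : Fin n → B} (hX : IsCoordSystem A X)
    (hY : Algebra.adjoin A (Set.range Y) = ⊤) : IsCoordSystem A Y := by
  let e := AlgEquiv.ofBijective (MvPolynomial.aeval X) hX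
  have hsurj : Function.Surjective (MvPolynomial.aeval (R := A) Y) := by
    rw [← AlgHom.range_eq_top, ← Algebra.adjoin_range_eq_range_aeval, hY]
  have hinj := ((e.symm : B →ₐ[A] MvPolynomial (Fin n) A).comp (MvPolynomial.aeval Y))
    |>.injective_of_surjective_of_isNoetherianRing (e.symm.surjective.comp hsurj)
  exact ⟨fun a b hab => hinj (by simp only [AlgHom.comp_apply, hab]), hsurj⟩

theorem IsCoordSystem.of_sub_mem_adjoin {A B : Type*} [CommRing A] [IsNoetherianRing A]
    [CommRing B] [Algebra A B] {X : Fin 3 → B} (hX : IsCoordSystem A X) {y₁ y₂ : B}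
    (hy₁ : y₁ ∈ Algebra.adjoin A {X 0})
    (hy₂ : y₂ ∈ Algebra.adjoin A {X 1 - y₁, X 0}) :
    IsCoordSystem A ![X 1 - y₁, X 2 - y₂, X 0] := by
  refine hX.of_adjoin_range_eq_top (eq_top_iff.mpr ?_)
  set S := Algebra.adjoin A (Set.range ![X 1 - y₁, X 2 - y₂, X 0])
  have hS : Algebra.adjoin A {X 1 - y₁, X 0} ≤ S := Algebra.adjoin_le <| by
    rintro _ (rfl | rfl)
    exacts [Algebra.subset_adjoin ⟨0, rfl⟩, Algebra.subset_adjoin ⟨2, rfl⟩]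
  have hX₀ : X 0 ∈ S := Algebra.subset_adjoin ⟨2, rfl⟩
  have hX₁ : X 1 ∈ S := by
    rw [show X 1 = (X 1 - y₁) + y₁ by ring]
    exact add_mem (Algebra.subset_adjoin ⟨0, rfl⟩)
      (Algebra.adjoin_le (Set.singleton_subset_iff.mpr hX₀) hy₁)
  have hX₂ : X 2 ∈ S := by
    rw [show X 2 = (X 2 - y₂) + y₂ by ring]
    exact add_mem (Algebra.subset_adjoin ⟨1, rfl⟩) (hS hy₂)
  rw [← (AlgHom.range_eq_top _).mpr hX.2, ← Algebra.adjoin_range_eq_range_aeval,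
    Algebra.adjoin_le_iff]
  rintro _ ⟨i, rfl⟩
  fin_cases i
  exacts [hX₀, hX₁, hX₂]

theorem Nat.cast_choose_mul_add_eq_one {S : Type*} [CommRing S] {N : ℕ}
    (h : ∀ i, 0 < i → i < N → (N.choose i : S) = 0) (a : ℕ) {r : ℕ} (hr : r < N) :
    ((a * N + r).choose r : S) = 1 := by
  have hN : (X + 1 : S[X]) ^ N = X ^ N + 1 := by
    ext i
    rw [coeff_X_add_one_pow, coeff_add, coeff_X_pow, coeff_one]
    rcases lt_trichotomy i N with hi | rfl | hi
    · rcases Nat.eq_zero_or_pos i with rfl | hi0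
      · simp [hi.ne]
      · simp [h i hi0 hi, hi.ne, hi0.ne']
    · simp [(Nat.zero_lt_of_lt hr).ne']
    · simp [Nat.choose_eq_zero_of_lt hi, hi.ne', (Nat.zero_lt_of_lt hi).ne']
  obtain ⟨q, hq⟩ : (X ^ N : S[X]) ∣ (X ^ N + 1) ^ a - 1 := by
    simpa using sub_dvd_pow_sub_pow ((X : S[X]) ^ N + 1) 1 a
  rw [← coeff_X_add_one_pow, pow_add, pow_mul', hN, eq_add_of_sub_eq hq, add_mul, mul_assoc,
    coeff_add, coeff_X_pow_mul', if_neg (by omega), one_mul, coeff_X_add_one_pow,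
    Nat.choose_self, Nat.cast_one, zero_add]

namespace ExpMap

section Basic

variable {A B : Type*} [CommRing A] [CommRing B] [Algebra A B] (δ : ExpMap A B)

theorem mem_invariants {b : B} : b ∈ δ.invariants ↔ δ.toFun b = C b := Iff.rfl

theorem coeff_toFun_zero (b : B) : (δ.toFun b).coeff 0 = b := by
  rw [coeff_zero_eq_eval_zero, δ.eval_zero]

theorem natDegree_toFun_pos_iff {b : B} : 0 < (δ.toFun b).natDegree ↔ b ∉ δ.invariants := by
  rw [mem_invariants, pos_iff_ne_zero, not_iff_not]
  refine ⟨fun h => ?_, fun h => by rw [h, natDegree_C]⟩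
  rw [eq_C_of_natDegree_eq_zero h, coeff_toFun_zero]

theorem leadingCoeff_toFun_ne_zero {b : B} (hb : b ∉ δ.invariants) :
    (δ.toFun b).leadingCoeff ≠ 0 :=
  leadingCoeff_ne_zero.mpr (ne_zero_of_natDegree_gt (δ.natDegree_toFun_pos_iff.mpr hb))

/-- The iterativity `δ_s ∘ δ_t = δ_{s+t}` compared coefficientwise in `s`. -/
theorem toFun_coeff (b : B) (i : ℕ) :
    δ.toFun ((δ.toFun b).coeff i) = ∑ j ∈ Finset.range ((δ.toFun b).natDegree + 1),
      C ((j.choose i : B) * (δ.toFun b).coeff j) * X ^ (j - i) := by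
  have h := congrArg (coeff · i) (δ.coassoc b)
  simp only [coeff_map, eval₂_eq_sum_range, finsetSum_coeff] at h
  change δ.toFun _ = _ at h
  rw [h]
  refine Finset.sum_congr rfl fun j _ => ?_
  rw [RingHom.comp_apply, coeff_C_mul, add_comm, coeff_X_add_C_pow, map_mul, map_natCast]
  ring

theorem coeff_toFun_coeff (b : B) {i : ℕ} (hi : i ≤ (δ.toFun b).natDegree) :
    (δ.toFun ((δ.toFun b).coeff i)).coeff ((δ.toFun b).natDegree - i) =
      ((δ.toFun b).natDegree.choose i : B) * (δ.toFun b).leadingCoeff := by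
  rw [toFun_coeff, finsetSum_coeff, Finset.sum_eq_single_of_mem _ (Finset.self_mem_range_succ _)]
  · rw [coeff_C_mul_X_pow, if_pos rfl, leadingCoeff]
  · intro j hj hjM
    rw [coeff_C_mul_X_pow]
    rcases lt_or_ge j i with hji | hij
    · rw [Nat.choose_eq_zero_of_lt hji, Nat.cast_zero, zero_mul, ite_self]
    · rw [Finset.mem_range] at hj
      rw [if_neg (by omega)]

theorem natDegree_toFun_coeff_le (b : B) (i : ℕ) :
    (δ.toFun ((δ.toFun b).coeff i)).natDegree ≤ (δ.toFun b).natDegree - i := by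
  rw [toFun_coeff]
  refine natDegree_sum_le_of_forall_le _ _ fun j hj => (natDegree_C_mul_X_pow_le _ _).trans ?_
  rw [Finset.mem_range] at hj
  omega

theorem leadingCoeff_toFun_mem_invariants (b : B) :
    (δ.toFun b).leadingCoeff ∈ δ.invariants := by
  have h := δ.natDegree_toFun_coeff_le b (δ.toFun b).natDegree
  rw [Nat.sub_self, Nat.le_zero] at h
  rw [mem_invariants, leadingCoeff, eq_C_of_natDegree_eq_zero h, coeff_toFun_zero]

theorem toFun_aeval {R : Type*} [CommRing R] [Algebra R B]
    (hR : ∀ r : R, algebraMap R B r ∈ δ.invariants) (y : B) (f : R[X]) :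
    δ.toFun (aeval y f) = (f.map (algebraMap R B)).comp (δ.toFun y) := by
  induction f using Polynomial.induction_on' with
  | add p q hp hq => rw [map_add, map_add, hp, hq, Polynomial.map_add, add_comp]
  | monomial n a =>
    rw [aeval_monomial, map_mul, map_pow, hR, map_monomial, ← C_mul_X_pow_eq_monomial, mul_comp,
      C_comp, pow_comp, X_comp]

theorem coeff_toFun_mem_adjoin {R : Type*} [CommRing R] [Algebra R B]
    (hR : ∀ r : R, algebraMap R B r ∈ δ.invariants) {x y : B}
    (hx : ∀ j, (δ.toFun x).coeff j ∈ Algebra.adjoin R {x}) (hy : y ∈ Algebra.adjoin R {x})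
    (j : ℕ) : (δ.toFun y).coeff j ∈ Algebra.adjoin R {x} := by
  suffices δ.toFun y ∈ lifts (algebraMap (Algebra.adjoin R {x}) B) by
    obtain ⟨c, hc⟩ := (lifts_iff_coeff_lifts _).mp this j
    exact hc ▸ c.2
  induction hy using Algebra.adjoin_induction with
  | mem z hz =>
    rw [Set.mem_singleton_iff.mp hz, lifts_iff_coeff_lifts]
    exact fun n => ⟨⟨_, hx n⟩, rfl⟩
  | algebraMap r =>
    rw [hR r]
    exact C_mem_lifts _ (algebraMap R (Algebra.adjoin R {x}) r)
  | add z w _ _ hz hw => exact map_add δ.toFun z w ▸ add_mem hz hw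
  | mul z w _ _ hz hw => exact map_mul δ.toFun z w ▸ mul_mem hz hw

theorem rank_le {n r : ℕ} (Y : Fin n → B) (hY : IsCoordSystem A Y)
    (hinv : ∀ i : Fin n, (i : ℕ) < n - r → Y i ∈ δ.invariants) : δ.rank n ≤ r :=
  Nat.sInf_le ⟨Y, hY, Algebra.adjoin_le (by rintro _ ⟨i, hi, rfl⟩; exact hinv i hi)⟩

end Basic

section Domain

variable {A B : Type*} [CommRing A] [CommRing B] [IsDomain B] [Algebra A B] (δ : ExpMap A B)

theorem cast_choose_eq_zero_of_coeff_mem_invariants {b : B}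
    (hb : ∀ j, 0 < j → (δ.toFun b).coeff j ∈ δ.invariants) {i : ℕ} (hi : 0 < i)
    (hiM : i < (δ.toFun b).natDegree) : ((δ.toFun b).natDegree.choose i : B) = 0 := by
  have h := δ.coeff_toFun_coeff b hiM.le
  rw [δ.mem_invariants.mp (hb i hi), coeff_C, if_neg (by omega)] at h
  have hb' : b ∉ δ.invariants := δ.natDegree_toFun_pos_iff.mp (hi.trans hiM)
  exact (mul_eq_zero.mp h.symm).resolve_right (δ.leadingCoeff_toFun_ne_zero hb')

theorem natDegree_toFun_coeff {b : B} (hb : b ∉ δ.invariants) {i : ℕ}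
    (hi : i ≤ (δ.toFun b).natDegree) (hchoose : ((δ.toFun b).natDegree.choose i : B) ≠ 0) :
    (δ.toFun ((δ.toFun b).coeff i)).natDegree = (δ.toFun b).natDegree - i := by
  refine (δ.natDegree_toFun_coeff_le b i).antisymm (le_natDegree_of_ne_zero ?_)
  rw [δ.coeff_toFun_coeff b hi]
  exact mul_ne_zero hchoose (δ.leadingCoeff_toFun_ne_zero hb)

variable {R : Type*} [CommRing R] [Algebra R B] {δ}

theorem natDegree_toFun_dvd_of_mem_adjoin (hR : ∀ r : R, algebraMap R B r ∈ δ.invariants)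
    {x y : B} (hy : y ∈ Algebra.adjoin R {x}) :
    (δ.toFun x).natDegree ∣ (δ.toFun y).natDegree := by
  rw [Algebra.adjoin_singleton_eq_range_aeval, AlgHom.mem_range] at hy
  obtain ⟨f, rfl⟩ := hy
  rw [toFun_aeval δ hR, natDegree_comp]
  exact dvd_mul_left _ _

theorem mem_range_of_mem_adjoin_of_mem_invariants
    (hR : ∀ r : R, algebraMap R B r ∈ δ.invariants) {x y : B} (hx : x ∉ δ.invariants)
    (hy : y ∈ Algebra.adjoin R {x}) (hyinv : y ∈ δ.invariants) :
    y ∈ Set.range (algebraMap R B) := by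
  rw [Algebra.adjoin_singleton_eq_range_aeval, AlgHom.mem_range] at hy
  obtain ⟨f, rfl⟩ := hy
  have hdeg : (f.map (algebraMap R B)).natDegree * (δ.toFun x).natDegree = 0 := by
    rw [← natDegree_comp, ← toFun_aeval δ hR, δ.mem_invariants.mp hyinv, natDegree_C]
  have hf : (f.map (algebraMap R B)).natDegree = 0 :=
    (mul_eq_zero.mp hdeg).resolve_right (δ.natDegree_toFun_pos_iff.mpr hx).ne'
  refine ⟨f.coeff 0, ?_⟩
  rw [aeval_def, eval₂_eq_eval_map, eq_C_of_natDegree_eq_zero hf, eval_C,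
    coeff_map]

/-- Write `M = aN + r` with `0 < r < N`: then `(M choose r) = 1`, so the coefficient `b_{M-r}`,
which lies in `R[x]`, has `δ`-degree `r`; but `δ`-degrees on `R[x]` are multiples of `N`. -/
theorem natDegree_toFun_dvd (hR : ∀ r : R, algebraMap R B r ∈ δ.invariants) {x b : B}
    (hx : δ.IsLocalSlice x) (hxinv : ∀ j, 0 < j → (δ.toFun x).coeff j ∈ δ.invariants)
    (hb : ∀ j, 0 < j → (δ.toFun b).coeff j ∈ Algebra.adjoin R {x}) :
    (δ.toFun x).natDegree ∣ (δ.toFun b).natDegree := by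
  set N := (δ.toFun x).natDegree
  set M := (δ.toFun b).natDegree
  by_cases hbinv : b ∈ δ.invariants
  · have hM : M = 0 := Nat.eq_zero_of_not_pos fun h => δ.natDegree_toFun_pos_iff.mp h hbinv
    rw [hM]
    exact dvd_zero N
  have hNM : N ≤ M := hx.2 b (δ.natDegree_toFun_pos_iff.mpr hbinv)
  set r := M % N
  by_contra hdvd
  have hr0 : 0 < r := Nat.pos_of_ne_zero (mt Nat.dvd_of_mod_eq_zero hdvd)
  have hrN : r < N := Nat.mod_lt _ hx.1
  have hchoose : (M.choose (M - r) : B) = 1 := by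
    have h := Nat.cast_choose_mul_add_eq_one (S := B)
      (fun i hi hiN => δ.cast_choose_eq_zero_of_coeff_mem_invariants hxinv hi hiN) (M / N) hrN
    rwa [Nat.div_add_mod', ← Nat.choose_symm (Nat.mod_le M N)] at h
  have hdeg := δ.natDegree_toFun_coeff hbinv (Nat.sub_le M r) (hchoose ▸ one_ne_zero)
  rw [Nat.sub_sub_self (Nat.mod_le M N)] at hdeg
  have hNr : N ∣ M % N := hdeg ▸ natDegree_toFun_dvd_of_mem_adjoin hR (hb (M - r) (by omega))
  exact absurd (Nat.le_of_dvd hr0 hNr) (not_le.mpr hrN)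

end Domain

section Field

variable {k B R : Type*} [Field k] [CommRing B] [IsDomain B] [Algebra k B] {δ : ExpMap k B}
  [CommRing R] [Algebra k R] [Algebra R B] [IsScalarTower k R B]

theorem exists_mem_adjoin_natDegree_toFun_sub_lt
    (hR : ∀ r : R, algebraMap R B r ∈ δ.invariants) {x b : B} (hx : δ.IsLocalSlice x)
    (hxk : ∀ j, 0 < j → (δ.toFun x).coeff j ∈ (⊥ : Subalgebra k B))
    (hb : ∀ j, 0 < j → (δ.toFun b).coeff j ∈ Algebra.adjoin R {x})
    (hbinv : b ∉ δ.invariants) :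
    ∃ y ∈ Algebra.adjoin R {x}, (δ.toFun (b - y)).natDegree < (δ.toFun b).natDegree := by
  have hM : 0 < (δ.toFun b).natDegree := δ.natDegree_toFun_pos_iff.mpr hbinv
  have hxinv : x ∉ δ.invariants := δ.natDegree_toFun_pos_iff.mp hx.1
  obtain ⟨ρ, hρ⟩ := mem_range_of_mem_adjoin_of_mem_invariants hR hxinv
    (hb _ hM) (δ.leadingCoeff_toFun_mem_invariants b)
  obtain ⟨κ, hκ⟩ := Algebra.mem_bot.mp (hxk _ hx.1)
  have hκ0 : κ ≠ 0 := by
    rintro rfl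
    exact δ.leadingCoeff_toFun_ne_zero hxinv (by rw [leadingCoeff, ← hκ, map_zero])
  obtain ⟨m, hm⟩ := natDegree_toFun_dvd hR hx
    (fun j hj => (bot_le : (⊥ : Subalgebra k B) ≤ δ.invariants) (hxk j hj)) hb
  have hc : algebraMap R B (ρ * algebraMap k R (κ⁻¹ ^ m)) * (δ.toFun x).leadingCoeff ^ m =
      (δ.toFun b).leadingCoeff := by
    rw [leadingCoeff, ← hκ, map_mul, ← IsScalarTower.algebraMap_apply, mul_assoc, ← map_pow,
      ← map_mul, inv_pow, inv_mul_cancel₀ (pow_ne_zero _ hκ0), map_one, mul_one, hρ,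
      leadingCoeff]
  set c := algebraMap R B (ρ * algebraMap k R (κ⁻¹ ^ m))
  refine ⟨c * x ^ m, mul_mem (Subalgebra.algebraMap_mem _ _)
    (pow_mem (Algebra.self_mem_adjoin_singleton R x) m), ?_⟩
  have hδ : δ.toFun (b - c * x ^ m) = δ.toFun b - C c * δ.toFun x ^ m := by
    rw [map_sub, map_mul, map_pow, δ.mem_invariants.mp (hR _)]
  have hle : (δ.toFun (b - c * x ^ m)).natDegree ≤ (δ.toFun b).natDegree := by
    rw [hδ]
    refine (natDegree_sub_le _ _).trans (max_le le_rfl ?_)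
    exact (natDegree_C_mul_le _ _).trans (natDegree_pow_le.trans (by rw [hm, mul_comm]))
  have hcoeff : (δ.toFun (b - c * x ^ m)).coeff (δ.toFun b).natDegree = 0 := by
    rw [hδ, coeff_sub, coeff_C_mul, hm, mul_comm, coeff_pow_mul_natDegree, hc, mul_comm, ← hm,
      leadingCoeff, sub_self]
  exact (natDegree_le_pred hle hcoeff).trans_lt (Nat.sub_lt hM one_pos)

theorem exists_sub_mem_invariants (hR : ∀ r : R, algebraMap R B r ∈ δ.invariants) {x : B}
    (hx : δ.IsLocalSlice x)
    (hxk : ∀ j, 0 < j → (δ.toFun x).coeff j ∈ (⊥ : Subalgebra k B)) (b : B)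
    (hb : ∀ j, 0 < j → (δ.toFun b).coeff j ∈ Algebra.adjoin R {x}) :
    ∃ y ∈ Algebra.adjoin R {x}, b - y ∈ δ.invariants := by
  have hxR : ∀ j, (δ.toFun x).coeff j ∈ Algebra.adjoin R {x} := by
    intro j
    rcases Nat.eq_zero_or_pos j with rfl | hj
    · rw [coeff_toFun_zero]
      exact Algebra.self_mem_adjoin_singleton R x
    · obtain ⟨a, ha⟩ := Algebra.mem_bot.mp (hxk j hj)
      rw [← ha, IsScalarTower.algebraMap_apply k R B]
      exact Subalgebra.algebraMap_mem _ _
  induction hM : (δ.toFun b).natDegree using Nat.strong_induction_on generalizing b with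
  | _ M ih =>
    by_cases hbinv : b ∈ δ.invariants
    · exact ⟨0, zero_mem _, by rwa [sub_zero]⟩
    obtain ⟨y, hy, hlt⟩ := exists_mem_adjoin_natDegree_toFun_sub_lt hR hx hxk hb hbinv
    have hby : ∀ j, 0 < j → (δ.toFun (b - y)).coeff j ∈ Algebra.adjoin R {x} := by
      intro j hj
      rw [map_sub, coeff_sub]
      exact sub_mem (hb j hj) (δ.coeff_toFun_mem_adjoin hR hxR hy j)
    obtain ⟨z, hz, hbz⟩ := ih _ (hM ▸ hlt) (b - y) hby rfl
    exact ⟨y + z, add_mem hy hz, by rwa [← sub_sub]⟩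

end Field

section Triangular

variable {k B : Type*} [Field k] [CommRing B] [IsDomain B] [Algebra k B] {δ : ExpMap k B}

theorem rank_le_one_of_isTriangularWith {X : Fin 3 → B} (htri : δ.IsTriangularWith X)
    (hx : X 0 ∉ δ.invariants) : δ.rank 3 ≤ 1 := by
  obtain ⟨hX, hcoef, hslice⟩ := htri
  have hloc : δ.IsLocalSlice (X 0) := hslice 0 hx fun l hl => absurd hl (Nat.not_lt_zero _)
  have hxk : ∀ j, 0 < j → (δ.toFun (X 0)).coeff j ∈ (⊥ : Subalgebra k B) := fun j hj => by
    simpa using hcoef 0 j hj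
  have hk : ∀ a : k, algebraMap k B a ∈ δ.invariants := Subalgebra.algebraMap_mem _
  obtain ⟨y₁, hy₁, hv⟩ := exists_sub_mem_invariants hk hloc hxk (X 1) fun j hj => by
    have h := hcoef 1 j hj
    rwa [show X '' {l : Fin 3 | (l : ℕ) < ((1 : Fin 3) : ℕ)} = {X 0} by
      ext; simp] at h
  set v := X 1 - y₁
  have hR : ∀ r : Algebra.adjoin k {v}, algebraMap _ B r ∈ δ.invariants := fun r =>
    Algebra.adjoin_le (Set.singleton_subset_iff.mpr hv) r.2
  have hX₁ : X 1 ∈ Algebra.adjoin k {v, X 0} := by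
    rw [show X 1 = v + y₁ by ring]
    exact add_mem (Algebra.subset_adjoin (Or.inl rfl))
      (Algebra.adjoin_mono (Set.subset_insert _ _) hy₁)
  obtain ⟨y₂, hy₂, hw⟩ := exists_sub_mem_invariants hR hloc hxk (X 2) fun j hj => by
    have h := hcoef 2 j hj
    rw [show X '' {l : Fin 3 | (l : ℕ) < ((2 : Fin 3) : ℕ)} = {X 0, X 1} by
      ext; simp [Fin.exists_fin_succ, eq_comm]] at h
    rw [← Subalgebra.mem_restrictScalars k, ← Algebra.adjoin_union_eq_adjoin_adjoin,
      Set.singleton_union]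
    refine Algebra.adjoin_le ?_ h
    rintro _ (rfl | rfl)
    · exact Algebra.subset_adjoin (Or.inr rfl)
    · exact hX₁
  rw [← Subalgebra.mem_restrictScalars k, ← Algebra.adjoin_union_eq_adjoin_adjoin,
    Set.singleton_union] at hy₂
  have hY := hX.of_sub_mem_adjoin hy₁ hy₂
  refine δ.rank_le _ hY fun i hi => ?_
  fin_cases i
  exacts [hv, hw, absurd hi (by decide)]

end Triangular

end ExpMap

/-- Let `B = k^[3]` and `δ ∈ EXP(B)` be triangular with respect to a
coordinate system `{X, Y, Z}`. If `rank δ = 2` then `δ(X) = X`; in particular every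
triangular exponential map of `k^[3]` has rank at most `2`. -/
theorem triangular_rank_two_fixes_first_variable
    {k B : Type*} [Field k] [CommRing B] [IsDomain B] [Algebra k B]
    (δ : ExpMap k B) (X : Fin 3 → B) (htri : δ.IsTriangularWith X) :
    (δ.rank 3 = 2 → δ.toFun (X 0) = Polynomial.C (X 0)) ∧ δ.rank 3 ≤ 2 := by
  by_cases hx : X 0 ∈ δ.invariants
  · refine ⟨fun _ => hx, δ.rank_le X htri.1 fun i hi => ?_⟩
    rwa [show i = 0 by omega]
  · have h := ExpMap.rank_le_one_of_isTriangularWith htri hx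
    exact ⟨fun h2 => by omega, by omega⟩
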